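/- arXiv:cs/0603006 — 2 statements merged into one kernel-verified Lean document; each statement's English description precedes it below -/
import Mathlib

section
/- Let L be a language with a unary connective ¬ and binary connectives ∨ and ∧, F the set of all wffs of L, and ⟨F, 𝒱, ⊨⟩ a semantic structure satisfying (A3) and (A1). Let |~ be a relation on P(F) × F. Then |~ is a coherency preserving pivotal-discriminative consequence relation if and only if |~ satisfies conditions (|~0), (|~6), (|~7), (|~8), (|~10), and (|~11). -/
/-- The set of models of a set of formulas `Γ`. -/
def modSet {F V : Type*} (sat : V → F → Prop) (Γ : Set F) : Set V :=
  {v | ∀ α ∈ Γ, sat v α}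

/-- The set of formulas satisfied in every valuation of `S`. -/
def thSet {F V : Type*} (sat : V → F → Prop) (S : Set V) : Set F :=
  {α | S ⊆ modSet sat {α}}

/-- `D`: the family of definable sets of valuations. -/
def defFam {F V : Type*} (sat : V → F → Prop) : Set (Set V) :=
  {S | ∃ Γ : Set F, modSet sat Γ = S}

/-- The basic consequence operator `C_⊢(Γ) = Th(Mod(Γ))`. -/
def cnsq {F V : Type*} (sat : V → F → Prop) (Γ : Set F) : Set F :=
  thSet sat (modSet sat Γ)

/-- `C_|~(Γ) = {α | Γ |~ α}`. -/
def relC {F : Type*} (rel : Set F → F → Prop) (Γ : Set F) : Set F :=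
  {α | rel Γ α}

/-- `𝐂`: the sets of valuations that do not satisfy both a formula and its negation. -/
def coFam {F V : Type*} (sat : V → F → Prop) (neg : F → F) : Set (Set V) :=
  {S | ∀ α, ¬(S ⊆ modSet sat {α} ∧ S ⊆ modSet sat {neg α})}

/-- `Γ` is consistent: for no `α` do we have both `Γ ⊢ α` and `Γ ⊢ ¬α`. -/
def isConsistent {F V : Type*} (sat : V → F → Prop) (neg : F → F) (Γ : Set F) : Prop :=
  ∀ α, ¬(modSet sat Γ ⊆ modSet sat {α} ∧ modSet sat Γ ⊆ modSet sat {neg α})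

/-- One step of the inductive construction of the sets `H_i(Γ)`:
`hStep … Γ B = {¬β : β ∈ C_⊢(B) \ C_|~(Γ) and ¬β ∉ C_⊢(B)}`. -/
def hStep {F V : Type*} (sat : V → F → Prop) (neg : F → F)
    (rel : Set F → F → Prop) (Γ B : Set F) : Set F :=
  {x | ∃ β, x = neg β ∧ β ∈ cnsq sat B ∧ β ∉ relC rel Γ ∧ neg β ∉ cnsq sat B}

/-- `hPrev … Γ n = Γ ∪ C_|~(Γ) ∪ H_1(Γ) ∪ … ∪ H_n(Γ)`. -/
def hPrev {F V : Type*} (sat : V → F → Prop) (neg : F → F)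
    (rel : Set F → F → Prop) (Γ : Set F) : ℕ → Set F
  | 0 => Γ ∪ relC rel Γ
  | n + 1 => hPrev sat neg rel Γ n ∪ hStep sat neg rel Γ (hPrev sat neg rel Γ n)

/-- `H(Γ) = ⋃_{i ≥ 1} H_i(Γ)`, where `H_{n+1}(Γ) = hStep … Γ (hPrev … Γ n)`. -/
def hSet {F V : Type*} (sat : V → F → Prop) (neg : F → F)
    (rel : Set F → F → Prop) (Γ : Set F) : Set F :=
  ⋃ n : ℕ, hStep sat neg rel Γ (hPrev sat neg rel Γ n)

/-- Assumption `(A2)`. -/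
def assumpA2 {F V : Type*} (sat : V → F → Prop) (neg : F → F) : Prop :=
  ∀ (Γ : Set F) (α : F), α ∉ cnsq sat Γ → neg α ∉ cnsq sat Γ →
    ¬(modSet sat Γ ∩ modSet sat {α} ⊆ modSet sat {neg α})

/-- Assumption `(A3)`. -/
def assumpA3 {F V : Type*} (sat : V → F → Prop) (neg : F → F)
    (disj conj : F → F → F) : Prop :=
  ∀ α β : F,
    modSet sat {disj α β} = modSet sat {α} ∪ modSet sat {β} ∧
    modSet sat {conj α β} = modSet sat {α} ∩ modSet sat {β} ∧
    modSet sat {neg (neg α)} = modSet sat {α} ∧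
    modSet sat {neg (disj α β)} = modSet sat {conj (neg α) (neg β)} ∧
    modSet sat {neg (conj α β)} = modSet sat {disj (neg α) (neg β)}

/-- Condition `(|~0)`. -/
def cond0 {F V : Type*} (sat : V → F → Prop) (rel : Set F → F → Prop) : Prop :=
  ∀ Γ Δ : Set F, cnsq sat Γ = cnsq sat Δ → relC rel Γ = relC rel Δ

/-- Condition `(|~6)`. -/
def cond6 {F V : Type*} (sat : V → F → Prop) (neg : F → F)
    (rel : Set F → F → Prop) : Prop :=
  ∀ (Γ : Set F) (α β : F),
    β ∈ cnsq sat (Γ ∪ relC rel Γ) → β ∉ relC rel Γ →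
    neg α ∈ cnsq sat (Γ ∪ relC rel Γ ∪ {neg β}) → α ∉ relC rel Γ

/-- Condition `(|~7)`. -/
def cond7 {F V : Type*} (sat : V → F → Prop) (neg : F → F) (disj : F → F → F)
    (rel : Set F → F → Prop) : Prop :=
  ∀ (Γ : Set F) (α β : F),
    α ∈ cnsq sat (Γ ∪ relC rel Γ) → α ∉ relC rel Γ →
    β ∈ cnsq sat (Γ ∪ relC rel Γ ∪ {neg α}) → β ∉ relC rel Γ →
    disj α β ∉ relC rel Γ

/-- Condition `(|~8)`. -/
def cond8 {F V : Type*} (sat : V → F → Prop) (neg : F → F)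
    (rel : Set F → F → Prop) : Prop :=
  ∀ (Γ : Set F) (α : F), α ∈ relC rel Γ → neg α ∉ cnsq sat (Γ ∪ relC rel Γ)

/-- Condition `(|~9)`. -/
def cond9 {F V : Type*} (sat : V → F → Prop) (neg : F → F)
    (rel : Set F → F → Prop) : Prop :=
  ∀ Γ Δ : Set F, relC rel Γ ∪ hSet sat neg rel Γ ⊆
    cnsq sat (Δ ∪ relC rel Δ ∪ hSet sat neg rel Δ ∪ Γ)

/-- Condition `(|~10)`. -/
def cond10 {F V : Type*} (sat : V → F → Prop) (neg : F → F)
    (rel : Set F → F → Prop) : Prop :=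
  ∀ Γ : Set F, isConsistent sat neg Γ →
    isConsistent sat neg (relC rel Γ) ∧ Γ ⊆ relC rel Γ ∧
      cnsq sat (relC rel Γ) = relC rel Γ

/-- Condition `(|~11)`. -/
def cond11 {F V : Type*} (sat : V → F → Prop) (neg : F → F)
    (rel : Set F → F → Prop) : Prop :=
  ∀ Γ : Set F, cnsq sat (Γ ∪ relC rel Γ ∪ hSet sat neg rel Γ) =
    thSet sat {v ∈ modSet sat Γ | ∀ Δ : Set F, v ∈ modSet sat Δ →
      v ∈ modSet sat (relC rel Δ ∪ hSet sat neg rel Δ)}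

/-- Condition `(|~12)`. -/
def cond12 {F V : Type*} (sat : V → F → Prop) (neg : F → F)
    (rel : Set F → F → Prop) : Prop :=
  Set.univ \ {v : V | ∀ Δ : Set F, v ∈ modSet sat Δ →
    v ∈ modSet sat (relC rel Δ ∪ hSet sat neg rel Δ)} ∈ defFam sat

/-!
Write `X(Γ) = Γ ∪ C_|~(Γ) ∪ H(Γ)` (`hExt`). As `𝒱` is finite, the decreasing chain
`Mod(Γ ∪ C_|~(Γ) ∪ H_1(Γ) ∪ … ∪ H_n(Γ))` stabilises at `Mod(X(Γ))`, so `¬β ∈ C_⊢(X(Γ))`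
for every `β ∈ C_⊢(X(Γ)) \ C_|~(Γ)`. By `(|~7)` and `(A3)` the negations added at each stage
merge into a single `¬(β₁ ∨ … ∨ βₖ)`, so every set of the chain is `Mod(Γ ∪ C_|~(Γ))` or
`Mod(Γ ∪ C_|~(Γ) ∪ {¬β})` with `β ∈ C_⊢(Γ ∪ C_|~(Γ)) \ C_|~(Γ)` (`pivotFam`). Then `(|~6)`
and `(|~8)` give `Γ |~ α ↔ α ∈ C_⊢(X(Γ)) ∧ ¬α ∉ C_⊢(X(Γ))`. With `(|~11)` this says that
`μ(A) = A ∩ N` represents `|~`, where `N` (`hNormal`) is the set of valuations satisfying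
`C_|~(Δ) ∪ H(Δ)` whenever they satisfy `Δ`; `(|~10)` makes this `μ` coherency preserving.

Conversely, a representing choice function has `μ(Mod Γ) ⊆ Mod(X(Γ))`, and strong coherence
gives `μ(Mod Γ) ⊆ Mod Γ ∩ N`. If `Mod(X(Γ))` is coherent, then so is its image under `μ`,
which lies inside `μ(Mod Γ)`; hence `Th(μ(Mod Γ)) ⊆ C_|~(Γ)`. If `Mod(X(Γ)) ⊆ Mod{φ, ¬φ}`,
then for `α ∈ Th(μ(Mod Γ))` the fixpoint property applied to `φ ∨ ¬α` gives
`α ∈ C_⊢(X(Γ))`. Either way `Th(Mod Γ ∩ N) = C_⊢(X(Γ))`, which is `(|~11)`.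
-/

def hExt {F V : Type*} (sat : V → F → Prop) (neg : F → F) (rel : Set F → F → Prop)
    (Γ : Set F) : Set F :=
  Γ ∪ relC rel Γ ∪ hSet sat neg rel Γ

def pivotFam {F V : Type*} (sat : V → F → Prop) (neg : F → F) (rel : Set F → F → Prop)
    (Γ : Set F) : Set (Set V) :=
  insert (modSet sat (Γ ∪ relC rel Γ))
    {S | ∃ β ∈ cnsq sat (Γ ∪ relC rel Γ), β ∉ relC rel Γ ∧
      S = modSet sat (Γ ∪ relC rel Γ ∪ {neg β})}

def hNormal {F V : Type*} (sat : V → F → Prop) (neg : F → F) (rel : Set F → F → Prop) :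
    Set V :=
  {v | ∀ Δ : Set F, v ∈ modSet sat Δ → v ∈ modSet sat (relC rel Δ ∪ hSet sat neg rel Δ)}

section

variable {F V : Type*} {sat : V → F → Prop} {neg : F → F} {disj conj : F → F → F}
  {rel : Set F → F → Prop} {Γ Δ B : Set F} {α β γ : F} {S : Set V}

theorem mem_modSet_singleton {v : V} : v ∈ modSet sat {α} ↔ sat v α := by
  simp [modSet]

theorem modSet_anti (h : Γ ⊆ Δ) : modSet sat Δ ⊆ modSet sat Γ :=
  fun _ hv α hα => hv α (h hα)

theorem modSet_union : modSet sat (Γ ∪ Δ) = modSet sat Γ ∩ modSet sat Δ := by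
  ext v
  simp only [modSet, Set.mem_ofPred_eq, Set.mem_union, Set.mem_inter_iff, or_imp, forall_and]

theorem modSet_iUnion {ι : Sort*} (T : ι → Set F) :
    modSet sat (⋃ i, T i) = ⋂ i, modSet sat (T i) := by
  ext v
  simp only [modSet, Set.mem_ofPred_eq, Set.mem_iUnion, Set.mem_iInter]
  exact ⟨fun h i α hα => h α ⟨i, hα⟩, fun h α ⟨i, hα⟩ => h i α hα⟩

theorem modSet_eq_sInter_image :
    modSet sat Γ = ⋂₀ ((fun α => modSet sat {α}) '' Γ) := by
  ext v
  simp [modSet]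

theorem mem_cnsq : α ∈ cnsq sat Γ ↔ modSet sat Γ ⊆ modSet sat {α} := Iff.rfl

theorem mem_cnsq_of_mem (h : α ∈ Γ) : α ∈ cnsq sat Γ :=
  modSet_anti (Set.singleton_subset_iff.2 h)

theorem cnsq_congr (h : modSet sat Γ = modSet sat Δ) : cnsq sat Γ = cnsq sat Δ :=
  congrArg (thSet sat) h

theorem modSet_eq_of_cnsq_eq (h : cnsq sat Γ = cnsq sat Δ) : modSet sat Γ = modSet sat Δ := by
  have hmod : ∀ Γ : Set F, modSet sat (cnsq sat Γ) = modSet sat Γ := fun Γ =>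
    subset_antisymm (modSet_anti fun _ => mem_cnsq_of_mem)
      fun v hv α hα => mem_modSet_singleton.1 (hα hv)
  rw [← hmod Γ, h, hmod]

theorem thSet_anti {S T : Set V} (h : S ⊆ T) : thSet sat T ⊆ thSet sat S :=
  fun _ hα => h.trans hα

theorem assumpA3.modSet_disj (hA3 : assumpA3 sat neg disj conj) (α β : F) :
    modSet sat {disj α β} = modSet sat {α} ∪ modSet sat {β} :=
  (hA3 α β).1

theorem assumpA3.modSet_neg_disj (hA3 : assumpA3 sat neg disj conj) (α β : F) :
    modSet sat {neg (disj α β)} = modSet sat {neg α} ∩ modSet sat {neg β} := by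
  rw [(hA3 α β).2.2.2.1, (hA3 (neg α) (neg β)).2.1]

theorem assumpA3.modSet_neg_neg (hA3 : assumpA3 sat neg disj conj) (α : F) :
    modSet sat {neg (neg α)} = modSet sat {α} :=
  (hA3 α α).2.2.1

theorem hPrev_subset_hExt (n : ℕ) : hPrev sat neg rel Γ n ⊆ hExt sat neg rel Γ := by
  induction n with
  | zero => exact Set.subset_union_left
  | succ n ih => exact Set.union_subset ih fun _ hx => Or.inr (Set.mem_iUnion.2 ⟨n, hx⟩)

theorem iUnion_hPrev : ⋃ n, hPrev sat neg rel Γ n = hExt sat neg rel Γ := by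
  refine subset_antisymm (Set.iUnion_subset hPrev_subset_hExt) ?_
  rintro x (hx | hx)
  · exact Set.mem_iUnion.2 ⟨0, hx⟩
  · obtain ⟨n, hn⟩ := Set.mem_iUnion.1 hx
    exact Set.mem_iUnion.2 ⟨n + 1, Or.inr hn⟩

theorem exists_modSet_hPrev_eq_hExt [Finite V] (Γ : Set F) :
    ∃ n, modSet sat (hPrev sat neg rel Γ n) = modSet sat (hExt sat neg rel Γ) := by
  have hanti : Antitone fun n => modSet sat (hPrev sat neg rel Γ n) :=
    antitone_nat_of_succ_le fun _ => modSet_anti Set.subset_union_left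
  obtain ⟨n, hn⟩ := WellFoundedLT.antitone_chain_condition hanti
  refine ⟨n, ?_⟩
  rw [← iUnion_hPrev, modSet_iUnion]
  refine subset_antisymm (Set.subset_iInter fun m => ?_) (Set.iInter_subset _ n)
  rcases le_total n m with h | h
  · exact (hn m h).le
  · exact hanti h

theorem neg_mem_cnsq_hExt [Finite V] (hγ : γ ∈ cnsq sat (hExt sat neg rel Γ))
    (hr : ¬ rel Γ γ) : neg γ ∈ cnsq sat (hExt sat neg rel Γ) := by
  obtain ⟨n, hn⟩ := exists_modSet_hPrev_eq_hExt (neg := neg) (rel := rel) (sat := sat) Γ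
  rw [← cnsq_congr hn] at hγ ⊢
  by_contra hnγ
  have hstep : neg γ ∈ hStep sat neg rel Γ (hPrev sat neg rel Γ n) := ⟨γ, rfl, hγ, hr, hnγ⟩
  exact hnγ (mem_cnsq.2 (hn ▸ mem_cnsq_of_mem (Or.inr (Set.mem_iUnion.2 ⟨n, hstep⟩))))

theorem inter_neg_mem_pivotFam (hA3 : assumpA3 sat neg disj conj)
    (h7 : cond7 sat neg disj rel) (hS : S ∈ pivotFam sat neg rel Γ)
    (hSβ : S ⊆ modSet sat {β}) (hβ : β ∉ relC rel Γ) :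
    S ∩ modSet sat {neg β} ∈ pivotFam sat neg rel Γ := by
  rcases hS with rfl | ⟨γ, hγ, hγr, rfl⟩
  · exact Or.inr ⟨β, hSβ, hβ, modSet_union.symm⟩
  · refine Or.inr ⟨disj γ β, ?_, h7 Γ γ β hγ hγr hSβ hβ, ?_⟩
    · rw [mem_cnsq, hA3.modSet_disj]
      exact hγ.trans Set.subset_union_left
    · rw [modSet_union (Δ := {neg (disj γ β)}), modSet_union (Δ := {neg γ}),
        hA3.modSet_neg_disj, Set.inter_assoc]

theorem inter_modSet_hStep_mem_pivotFam [Finite V] (hA3 : assumpA3 sat neg disj conj)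
    (h7 : cond7 sat neg disj rel) (hB : modSet sat B ∈ pivotFam sat neg rel Γ) :
    modSet sat B ∩ modSet sat (hStep sat neg rel Γ B) ∈ pivotFam sat neg rel Γ := by
  rw [modSet_eq_sInter_image (Γ := hStep sat neg rel Γ B)]
  refine Set.Finite.induction_on_subset (motive := fun t _ => modSet sat B ∩ ⋂₀ t ∈ _) _
    (Set.toFinite _) (by rwa [Set.sInter_empty, Set.inter_univ]) ?_
  rintro _ t ⟨_, ⟨β, rfl, hβ, hβr, -⟩, rfl⟩ - - ht
  rw [Set.sInter_insert, Set.inter_left_comm, Set.inter_comm]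
  exact inter_neg_mem_pivotFam hA3 h7 ht (Set.inter_subset_left.trans hβ) hβr

theorem modSet_hPrev_mem_pivotFam [Finite V] (hA3 : assumpA3 sat neg disj conj)
    (h7 : cond7 sat neg disj rel) (n : ℕ) :
    modSet sat (hPrev sat neg rel Γ n) ∈ pivotFam sat neg rel Γ := by
  induction n with
  | zero => exact Set.mem_insert _ _
  | succ n ih => exact modSet_union ▸ inter_modSet_hStep_mem_pivotFam hA3 h7 ih

theorem not_subset_neg_of_mem_pivotFam (h6 : cond6 sat neg rel) (h8 : cond8 sat neg rel)
    (hα : rel Γ α) (hS : S ∈ pivotFam sat neg rel Γ) : ¬ S ⊆ modSet sat {neg α} := by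
  rcases hS with rfl | ⟨β, hβ, hβr, rfl⟩
  · exact h8 Γ α hα
  · exact fun h => h6 Γ α β hβ hβr h hα

theorem rel_iff_mem_cnsq_hExt [Finite V] (hA3 : assumpA3 sat neg disj conj)
    (h6 : cond6 sat neg rel) (h7 : cond7 sat neg disj rel) (h8 : cond8 sat neg rel) :
    rel Γ α ↔ α ∈ cnsq sat (hExt sat neg rel Γ) ∧ neg α ∉ cnsq sat (hExt sat neg rel Γ) := by
  refine ⟨fun hα => ⟨mem_cnsq_of_mem (Or.inl (Or.inr hα)), fun hn => ?_⟩, fun ⟨hα, hn⟩ => ?_⟩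
  · obtain ⟨n, hn'⟩ := exists_modSet_hPrev_eq_hExt (neg := neg) (rel := rel) (sat := sat) Γ
    exact not_subset_neg_of_mem_pivotFam h6 h8 hα (modSet_hPrev_mem_pivotFam hA3 h7 n)
      (hn' ▸ hn)
  · by_contra hr
    exact hn (neg_mem_cnsq_hExt hα hr)

theorem hSet_eq_empty (hsub : Γ ⊆ relC rel Γ) (hfix : cnsq sat (relC rel Γ) = relC rel Γ) :
    hSet sat neg rel Γ = ∅ := by
  have hu : Γ ∪ relC rel Γ = relC rel Γ := Set.union_eq_self_of_subset_left hsub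
  have hstep : hStep sat neg rel Γ (Γ ∪ relC rel Γ) = ∅ :=
    Set.eq_empty_of_forall_notMem fun _ ⟨β, _, hβ, hβr, _⟩ => hβr (hfix ▸ hu ▸ hβ)
  have hprev : ∀ n, hPrev sat neg rel Γ n = Γ ∪ relC rel Γ := fun n => by
    induction n with
    | zero => rfl
    | succ n ih => rw [hPrev, ih, hstep, Set.union_empty]
  simp only [hSet, hprev, hstep, Set.iUnion_empty]

theorem inter_hNormal_subset_modSet_hExt :
    modSet sat Γ ∩ hNormal sat neg rel ⊆ modSet sat (hExt sat neg rel Γ) := by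
  rintro v ⟨hvΓ, hvN⟩ β ((hβ | hβ) | hβ)
  · exact hvΓ β hβ
  · exact hvN Γ hvΓ β (Or.inl hβ)
  · exact hvN Γ hvΓ β (Or.inr hβ)

theorem cond11_iff : cond11 sat neg rel ↔ ∀ Γ : Set F,
    cnsq sat (hExt sat neg rel Γ) = thSet sat (modSet sat Γ ∩ hNormal sat neg rel) :=
  Iff.rfl

theorem inter_hNormal_mem_coFam (h10 : cond10 sat neg rel) (h11 : cond11 sat neg rel)
    (hΓ : modSet sat Γ ∈ coFam sat neg) : modSet sat Γ ∩ hNormal sat neg rel ∈ coFam sat neg := by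
  obtain ⟨hcons, hsub, hfix⟩ := h10 Γ hΓ
  have hext : cnsq sat (hExt sat neg rel Γ) = relC rel Γ := by
    rw [hExt, hSet_eq_empty hsub hfix, Set.union_empty,
      Set.union_eq_self_of_subset_left hsub, hfix]
  have hth : thSet sat (modSet sat Γ ∩ hNormal sat neg rel) = relC rel Γ :=
    (cond11_iff.1 h11 Γ).symm.trans hext
  rintro β ⟨hβ, hnβ⟩
  refine hcons β ⟨mem_cnsq_of_mem ?_, mem_cnsq_of_mem ?_⟩
  · rw [← hth]; exact hβ
  · rw [← hth]; exact hnβ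

def IsRepresentedBy {F V : Type*} (sat : V → F → Prop) (neg : F → F)
    (rel : Set F → F → Prop) (μ : Set V → Set V) : Prop :=
  ∀ (Γ : Set F) (α : F), rel Γ α ↔
    (μ (modSet sat Γ) ⊆ modSet sat {α} ∧ ¬ μ (modSet sat Γ) ⊆ modSet sat {neg α})

theorem isRepresentedBy_inter_hNormal [Finite V] (hA3 : assumpA3 sat neg disj conj)
    (h6 : cond6 sat neg rel) (h7 : cond7 sat neg disj rel) (h8 : cond8 sat neg rel)
    (h11 : cond11 sat neg rel) : IsRepresentedBy sat neg rel (· ∩ hNormal sat neg rel) := by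
  intro Γ α
  rw [rel_iff_mem_cnsq_hExt hA3 h6 h7 h8, cond11_iff.1 h11]
  rfl

namespace IsRepresentedBy

variable {μ : Set V → Set V}

theorem subset_neg (hrep : IsRepresentedBy sat neg rel μ)
    (hα : μ (modSet sat Γ) ⊆ modSet sat {α}) (hr : ¬ rel Γ α) :
    μ (modSet sat Γ) ⊆ modSet sat {neg α} := by
  by_contra h
  exact hr ((hrep Γ α).2 ⟨hα, h⟩)

theorem rel_of_mem_coFam (hrep : IsRepresentedBy sat neg rel μ)
    (hco : μ (modSet sat Γ) ∈ coFam sat neg) (hα : μ (modSet sat Γ) ⊆ modSet sat {α}) :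
    rel Γ α :=
  (hrep Γ α).2 ⟨hα, fun h => hco α ⟨hα, h⟩⟩

theorem subset_modSet_union_relC (hrep : IsRepresentedBy sat neg rel μ)
    (hμ : ∀ A ∈ defFam sat, μ A ⊆ A) :
    μ (modSet sat Γ) ⊆ modSet sat (Γ ∪ relC rel Γ) := by
  rw [modSet_union]
  exact Set.subset_inter (hμ _ ⟨Γ, rfl⟩) fun v hv β hβ =>
    mem_modSet_singleton.1 (((hrep Γ β).1 hβ).1 hv)

theorem subset_modSet_hPrev (hrep : IsRepresentedBy sat neg rel μ)
    (hμ : ∀ A ∈ defFam sat, μ A ⊆ A) (n : ℕ) :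
    μ (modSet sat Γ) ⊆ modSet sat (hPrev sat neg rel Γ n) := by
  induction n with
  | zero => exact hrep.subset_modSet_union_relC hμ
  | succ n ih =>
    rw [hPrev, modSet_union]
    refine Set.subset_inter ih ?_
    rintro v hv _ ⟨γ, rfl, hγ, hγr, -⟩
    exact mem_modSet_singleton.1 (hrep.subset_neg (ih.trans hγ) hγr hv)

theorem subset_modSet_hExt (hrep : IsRepresentedBy sat neg rel μ)
    (hμ : ∀ A ∈ defFam sat, μ A ⊆ A) :
    μ (modSet sat Γ) ⊆ modSet sat (hExt sat neg rel Γ) := by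
  rw [← iUnion_hPrev, modSet_iUnion]
  exact Set.subset_iInter (hrep.subset_modSet_hPrev hμ)

theorem subset_hNormal (hrep : IsRepresentedBy sat neg rel μ)
    (hμ : ∀ A ∈ defFam sat, μ A ⊆ A)
    (hSC : ∀ A ∈ defFam sat, ∀ B ∈ defFam sat, μ B ∩ A ⊆ μ A) :
    μ (modSet sat Γ) ⊆ hNormal sat neg rel := fun _ hv Δ hvΔ =>
  modSet_anti (Set.union_subset_union_left _ Set.subset_union_right) <|
    hrep.subset_modSet_hExt hμ (hSC _ ⟨Δ, rfl⟩ _ ⟨Γ, rfl⟩ ⟨hv, hvΔ⟩)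

theorem thSet_subset_cnsq_hExt [Finite V] (hA3 : assumpA3 sat neg disj conj)
    (hrep : IsRepresentedBy sat neg rel μ) (hμ : ∀ A ∈ defFam sat, μ A ⊆ A)
    (hSC : ∀ A ∈ defFam sat, ∀ B ∈ defFam sat, μ B ∩ A ⊆ μ A)
    (hCP : ∀ A ∈ defFam sat, A ∈ coFam sat neg → μ A ∈ coFam sat neg) :
    thSet sat (μ (modSet sat Γ)) ⊆ cnsq sat (hExt sat neg rel Γ) := by
  intro α hα
  set P := modSet sat (hExt sat neg rel Γ)
  have hμP : μ (modSet sat Γ) ⊆ P := hrep.subset_modSet_hExt hμ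
  by_cases hP : P ∈ coFam sat neg
  · have hPM : P ⊆ modSet sat Γ :=
      modSet_anti (Set.subset_union_left.trans Set.subset_union_left)
    have hμPΓ : μ P ⊆ μ (modSet sat Γ) := fun v hv =>
      hSC _ ⟨Γ, rfl⟩ _ ⟨_, rfl⟩ ⟨hv, hPM (hμ _ ⟨_, rfl⟩ hv)⟩
    have hco : μ (modSet sat Γ) ∈ coFam sat neg := fun β ⟨hβ, hnβ⟩ =>
      hCP P ⟨_, rfl⟩ hP β ⟨hμPΓ.trans hβ, hμPΓ.trans hnβ⟩
    exact mem_cnsq_of_mem (Or.inl (Or.inr (hrep.rel_of_mem_coFam hco hα)))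
  · obtain ⟨φ, hφ, hnφ⟩ : ∃ φ, P ⊆ modSet sat {φ} ∧ P ⊆ modSet sat {neg φ} := by
      simpa [coFam] using hP
    have hγ : disj φ (neg α) ∈ cnsq sat (hExt sat neg rel Γ) := by
      rw [mem_cnsq, hA3.modSet_disj]
      exact hφ.trans Set.subset_union_left
    have hnγ : modSet sat {neg (disj φ (neg α))} = modSet sat {neg φ} ∩ modSet sat {α} := by
      rw [hA3.modSet_neg_disj, hA3.modSet_neg_neg]
    have hr : ¬ rel Γ (disj φ (neg α)) := fun hr =>
      ((hrep Γ _).1 hr).2 (hnγ ▸ Set.subset_inter (hμP.trans hnφ) hα)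
    have h := neg_mem_cnsq_hExt hγ hr
    rw [mem_cnsq, hnγ] at h
    exact h.trans Set.inter_subset_right

theorem cond0 (hrep : IsRepresentedBy sat neg rel μ) : cond0 sat rel := by
  intro Γ Δ h
  ext α
  simp only [relC, Set.mem_ofPred_eq, hrep _ α, modSet_eq_of_cnsq_eq h]

theorem cond6 (hrep : IsRepresentedBy sat neg rel μ) (hμ : ∀ A ∈ defFam sat, μ A ⊆ A) :
    cond6 sat neg rel := by
  intro Γ α β hβ hβr hα hr
  have hΓC := hrep.subset_modSet_union_relC hμ (Γ := Γ)
  have hnβ := hrep.subset_neg (hΓC.trans hβ) hβr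
  refine ((hrep Γ α).1 hr).2 (subset_trans ?_ hα)
  rw [modSet_union]
  exact Set.subset_inter hΓC hnβ

theorem cond7 (hA3 : assumpA3 sat neg disj conj) (hrep : IsRepresentedBy sat neg rel μ)
    (hμ : ∀ A ∈ defFam sat, μ A ⊆ A) : cond7 sat neg disj rel := by
  intro Γ α β hα hαr hβ hβr hr
  have hΓC := hrep.subset_modSet_union_relC hμ (Γ := Γ)
  have hnα := hrep.subset_neg (hΓC.trans hα) hαr
  have hΓCα : μ (modSet sat Γ) ⊆ modSet sat (Γ ∪ relC rel Γ ∪ {neg α}) := by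
    rw [modSet_union]
    exact Set.subset_inter hΓC hnα
  have hnβ := hrep.subset_neg (hΓCα.trans hβ) hβr
  refine ((hrep Γ _).1 hr).2 ?_
  rw [hA3.modSet_neg_disj]
  exact Set.subset_inter hnα hnβ

theorem cond8 (hrep : IsRepresentedBy sat neg rel μ) (hμ : ∀ A ∈ defFam sat, μ A ⊆ A) :
    cond8 sat neg rel := fun Γ α hα hnα =>
  ((hrep Γ α).1 hα).2 ((hrep.subset_modSet_union_relC hμ).trans hnα)

theorem cond10 (hrep : IsRepresentedBy sat neg rel μ) (hμ : ∀ A ∈ defFam sat, μ A ⊆ A)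
    (hCP : ∀ A ∈ defFam sat, A ∈ coFam sat neg → μ A ∈ coFam sat neg) :
    cond10 sat neg rel := by
  intro Γ hΓ
  have hco : μ (modSet sat Γ) ∈ coFam sat neg := hCP _ ⟨Γ, rfl⟩ hΓ
  have hμC : μ (modSet sat Γ) ⊆ modSet sat (relC rel Γ) :=
    (hrep.subset_modSet_union_relC hμ).trans (modSet_anti Set.subset_union_right)
  refine ⟨fun β ⟨hβ, hnβ⟩ => hco β ⟨hμC.trans hβ, hμC.trans hnβ⟩,
    fun γ hγ => hrep.rel_of_mem_coFam hco ((hμ _ ⟨Γ, rfl⟩).trans (mem_cnsq_of_mem hγ)),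
    subset_antisymm (fun β hβ => hrep.rel_of_mem_coFam hco (hμC.trans hβ))
      fun _ => mem_cnsq_of_mem⟩

theorem cond11 [Finite V] (hA3 : assumpA3 sat neg disj conj)
    (hrep : IsRepresentedBy sat neg rel μ) (hμ : ∀ A ∈ defFam sat, μ A ⊆ A)
    (hSC : ∀ A ∈ defFam sat, ∀ B ∈ defFam sat, μ B ∩ A ⊆ μ A)
    (hCP : ∀ A ∈ defFam sat, A ∈ coFam sat neg → μ A ∈ coFam sat neg) :
    cond11 sat neg rel := by
  refine cond11_iff.2 fun Γ => subset_antisymm (thSet_anti inter_hNormal_subset_modSet_hExt) ?_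
  calc thSet sat (modSet sat Γ ∩ hNormal sat neg rel)
      ⊆ thSet sat (μ (modSet sat Γ)) :=
        thSet_anti (Set.subset_inter (hμ _ ⟨Γ, rfl⟩) (hrep.subset_hNormal hμ hSC))
    _ ⊆ cnsq sat (hExt sat neg rel Γ) := hrep.thSet_subset_cnsq_hExt hA3 hμ hSC hCP

end IsRepresentedBy

end

/-- Under `(A3)` and `(A1)`, `|~` is a coherency preserving
pivotal-discriminative consequence relation iff it satisfies `(|~0)`, `(|~6)`, `(|~7)`,
`(|~8)`, `(|~10)`, and `(|~11)`. -/
theorem stmt12 {F V : Type*} (neg : F → F) (disj conj : F → F → F)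
    (sat : V → F → Prop)
    (hA3 : assumpA3 sat neg disj conj) (hA1 : Finite V)
    (rel : Set F → F → Prop) :
    (∃ μ : Set V → Set V,
        (∀ A ∈ defFam sat, μ A ⊆ A) ∧
        (∀ A ∈ defFam sat, ∀ B ∈ defFam sat, μ B ∩ A ⊆ μ A) ∧
        (∀ A ∈ defFam sat, A ∈ coFam sat neg → μ A ∈ coFam sat neg) ∧
        (∀ (Γ : Set F) (α : F), rel Γ α ↔
          (μ (modSet sat Γ) ⊆ modSet sat {α} ∧
            ¬ μ (modSet sat Γ) ⊆ modSet sat {neg α}))) ↔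
      (cond0 sat rel ∧ cond6 sat neg rel ∧ cond7 sat neg disj rel ∧
        cond8 sat neg rel ∧ cond10 sat neg rel ∧ cond11 sat neg rel) := by
  constructor
  · rintro ⟨μ, hμ, hSC, hCP, hrep⟩
    have hrep : IsRepresentedBy sat neg rel μ := hrep
    exact ⟨hrep.cond0, hrep.cond6 hμ, hrep.cond7 hA3 hμ, hrep.cond8 hμ, hrep.cond10 hμ hCP,
      hrep.cond11 hA3 hμ hSC hCP⟩
  · rintro ⟨-, h6, h7, h8, h10, h11⟩
    refine ⟨(· ∩ hNormal sat neg rel), fun _ _ => Set.inter_subset_left,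
      fun _ _ _ _ _ hv => ⟨hv.2, hv.1.2⟩, ?_, isRepresentedBy_inter_hNormal hA3 h6 h7 h8 h11⟩
    rintro _ ⟨Γ, rfl⟩ hΓ
    exact inter_hNormal_mem_coFam h10 h11 hΓ
end

section
/- Let L be a language with a unary connective ¬ and binary connectives ∨ and ∧, F the set of all wffs of L, and ⟨F, 𝒱, ⊨⟩ a semantic structure satisfying (A3), (A1), and (A2). Let |~ be a relation on P(F) × F. Then |~ is a pivotal-discriminative consequence relation if and only if |~ satisfies conditions (|~0), (|~6), (|~7), (|~8), and (|~11). -/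
/-!
Write `Y(Γ)` for the models of `hClosure Γ = Γ ∪ C_|~(Γ) ∪ H(Γ)`. Since `𝒱` is finite, the
decreasing chain `Mod(Γ ∪ C_|~(Γ) ∪ H_1(Γ) ∪ … ∪ H_n(Γ))` becomes stationary, and its
stationary value is `Y(Γ)`; hence `(*)`: if `β` holds on `Y(Γ)` and `Γ |/~ β`, then `¬β` holds
on `Y(Γ)`.

If `|~` is induced by a strongly coherent `μ`, then `μ(Mod Γ) ⊆ Y(Γ)`, and conversely every
formula true on `μ(Mod Γ)` is true on `Y(Γ)`: for `γ` with `Γ |/~ γ`, `(A2)` makes `Y(Γ)` decide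
`γ ∧ ¬γ`, and `(*)` excludes `¬(γ ∧ ¬γ)`. The set on the right of `(|~11)` lies between
`μ(Mod Γ)` and `Y(Γ)`, which gives `(|~11)`.

Conversely, `(|~6)`–`(|~8)` say that `|~` is induced by `Y(Γ)` itself. Call `Mod(Γ ∪ C_|~(Γ))`
and `Mod(Γ ∪ C_|~(Γ) ∪ {¬δ})`, for `δ ∈ C_⊢(Γ ∪ C_|~(Γ)) \ C_|~(Γ)`, cut regions: by `(|~7)`,
cutting a cut region by `¬β` for a `β` that it satisfies and `Γ |/~ β` again gives a cut region,
so a minimal cut region survives the whole construction of `H(Γ)` and lies in `Y(Γ)`; by `(|~6)`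
and `(|~8)`, `¬α` fails on every cut region when `Γ |~ α`. Finally `(|~11)` moves this to the
choice function `μ(A) = A ∩ {v : v ⊨ C_|~(Δ) ∪ H(Δ) whenever v ⊨ Δ}`.
-/

def hClosure {F V : Type*} (sat : V → F → Prop) (neg : F → F) (rel : Set F → F → Prop)
    (Γ : Set F) : Set F :=
  Γ ∪ relC rel Γ ∪ hSet sat neg rel Γ

def IsCutRegion {F V : Type*} (sat : V → F → Prop) (neg : F → F) (rel : Set F → F → Prop)
    (Γ : Set F) (T : Set V) : Prop :=
  T = modSet sat (Γ ∪ relC rel Γ) ∨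
    ∃ δ ∈ cnsq sat (Γ ∪ relC rel Γ), δ ∉ relC rel Γ ∧
      T = modSet sat (Γ ∪ relC rel Γ ∪ {neg δ})

def preferredVals {F V : Type*} (sat : V → F → Prop) (neg : F → F) (rel : Set F → F → Prop) :
    Set V :=
  {v | ∀ Δ : Set F, v ∈ modSet sat Δ → v ∈ modSet sat (relC rel Δ ∪ hSet sat neg rel Δ)}

def Induces {F V : Type*} (sat : V → F → Prop) (neg : F → F) (μ : Set V → Set V)
    (rel : Set F → F → Prop) : Prop :=
  ∀ (Γ : Set F) (α : F), rel Γ α ↔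
    (μ (modSet sat Γ) ⊆ modSet sat {α} ∧ ¬ μ (modSet sat Γ) ⊆ modSet sat {neg α})

section

variable {F V : Type*} {sat : V → F → Prop} {neg : F → F} {disj conj : F → F → F}
  {rel : Set F → F → Prop} {Γ : Set F} {S T : Set V}

theorem modSet_union_s14 (A B : Set F) : modSet sat (A ∪ B) = modSet sat A ∩ modSet sat B := by
  ext v; simp [modSet, or_imp, forall_and]

theorem modSet_anti_s14 {A B : Set F} (h : A ⊆ B) : modSet sat B ⊆ modSet sat A :=
  fun _ hv α hα => hv α (h hα)

theorem subset_modSet_iff : S ⊆ modSet sat Γ ↔ ∀ α ∈ Γ, S ⊆ modSet sat {α} := by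
  simp only [Set.subset_def, modSet, Set.mem_ofPred_eq, Set.mem_singleton_iff, forall_eq]
  exact ⟨fun h α hα v hv => h v hv α hα, fun h v hv α hα => h α hα v hv⟩

theorem modSet_cnsq (Γ : Set F) : modSet sat (cnsq sat Γ) = modSet sat Γ :=
  (modSet_anti_s14 fun _ hα => modSet_anti_s14 (Set.singleton_subset_iff.2 hα)).antisymm
    (subset_modSet_iff.2 fun _ hα => hα)

theorem modSet_hClosure_subset_of_mem (Γ : Set F) {α : F} (hα : α ∈ relC rel Γ) :
    modSet sat (hClosure sat neg rel Γ) ⊆ modSet sat {α} :=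
  modSet_anti_s14 (Set.singleton_subset_iff.2 (Or.inl (Or.inr hα)))

theorem cnsq_or_neg_mem_of_assumpA2 (hA2 : assumpA2 sat neg) {α : F}
    (h : modSet sat Γ ∩ modSet sat {α} ⊆ modSet sat {neg α}) :
    α ∈ cnsq sat Γ ∨ neg α ∈ cnsq sat Γ := by
  by_contra! hα
  exact hA2 Γ α hα.1 hα.2 h

theorem hPrev_mono (Γ : Set F) : Monotone (hPrev sat neg rel Γ) :=
  monotone_nat_of_le_succ fun _ => Set.subset_union_left

theorem hPrev_subset_hClosure (Γ : Set F) (n : ℕ) :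
    hPrev sat neg rel Γ n ⊆ hClosure sat neg rel Γ := by
  induction n with
  | zero => exact Set.subset_union_left
  | succ n ih =>
    exact Set.union_subset ih ((Set.subset_iUnion (fun n => hStep sat neg rel Γ
      (hPrev sat neg rel Γ n)) n).trans Set.subset_union_right)

theorem subset_modSet_hStep
    (hneg : ∀ β, β ∉ relC rel Γ → S ⊆ modSet sat {β} → S ⊆ modSet sat {neg β})
    {B : Set F} (hB : S ⊆ modSet sat B) :
    S ⊆ modSet sat (hStep sat neg rel Γ B) := by
  rw [subset_modSet_iff]
  rintro _ ⟨β, rfl, hβ, hβΓ, -⟩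
  exact hneg β hβΓ (hB.trans hβ)

theorem subset_modSet_hPrev
    (hneg : ∀ β, β ∉ relC rel Γ → S ⊆ modSet sat {β} → S ⊆ modSet sat {neg β})
    (h0 : S ⊆ modSet sat (Γ ∪ relC rel Γ)) (n : ℕ) :
    S ⊆ modSet sat (hPrev sat neg rel Γ n) := by
  induction n with
  | zero => exact h0
  | succ n ih =>
    rw [hPrev, modSet_union_s14]
    exact Set.subset_inter ih (subset_modSet_hStep hneg ih)

theorem subset_modSet_hClosure
    (hneg : ∀ β, β ∉ relC rel Γ → S ⊆ modSet sat {β} → S ⊆ modSet sat {neg β})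
    (h0 : S ⊆ modSet sat (Γ ∪ relC rel Γ)) :
    S ⊆ modSet sat (hClosure sat neg rel Γ) := by
  rw [hClosure, modSet_union_s14]
  refine Set.subset_inter h0 (subset_modSet_iff.2 fun α hα => ?_)
  obtain ⟨n, hn⟩ := Set.mem_iUnion.1 hα
  exact subset_modSet_iff.1 (subset_modSet_hStep hneg (subset_modSet_hPrev hneg h0 n)) α hn

theorem exists_modSet_hPrev_subset_succ [Finite V] (Γ : Set F) :
    ∃ N, modSet sat (hPrev sat neg rel Γ N) ⊆ modSet sat (hPrev sat neg rel Γ (N + 1)) := by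
  obtain ⟨_, ⟨N, rfl⟩, hmin⟩ := exists_minimal_of_wellFoundedLT
    (· ∈ Set.range fun n => modSet sat (hPrev sat neg rel Γ n)) ⟨_, 0, rfl⟩
  exact ⟨N, hmin ⟨N + 1, rfl⟩ (modSet_anti_s14 (hPrev_mono Γ N.le_succ))⟩

theorem subset_modSet_neg_of_stable {N : ℕ}
    (hN : modSet sat (hPrev sat neg rel Γ N) ⊆ modSet sat (hPrev sat neg rel Γ (N + 1)))
    {β : F} (hβ : β ∉ relC rel Γ) (hNβ : modSet sat (hPrev sat neg rel Γ N) ⊆ modSet sat {β}) :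
    modSet sat (hPrev sat neg rel Γ N) ⊆ modSet sat {neg β} := by
  by_cases hnβ : neg β ∈ cnsq sat (hPrev sat neg rel Γ N)
  · exact hnβ
  · have hstep : neg β ∈ hStep sat neg rel Γ (hPrev sat neg rel Γ N) := ⟨β, rfl, hNβ, hβ, hnβ⟩
    exact hN.trans (modSet_anti_s14 (Set.singleton_subset_iff.2 (Or.inr hstep)))

theorem modSet_hClosure_subset_neg [Finite V] {β : F} (hβ : β ∉ relC rel Γ)
    (h : modSet sat (hClosure sat neg rel Γ) ⊆ modSet sat {β}) :
    modSet sat (hClosure sat neg rel Γ) ⊆ modSet sat {neg β} := by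
  obtain ⟨N, hN⟩ := exists_modSet_hPrev_subset_succ (sat := sat) (neg := neg) (rel := rel) Γ
  have hNY : modSet sat (hPrev sat neg rel Γ N) ⊆ modSet sat (hClosure sat neg rel Γ) :=
    subset_modSet_hClosure (fun _ => subset_modSet_neg_of_stable hN)
      (modSet_anti_s14 (hPrev_mono Γ N.zero_le))
  exact (modSet_anti_s14 (hPrev_subset_hClosure Γ N)).trans
    (subset_modSet_neg_of_stable hN hβ (hNY.trans h))

section Induces

variable {μ : Set V → Set V}

theorem subset_modSet_relC_of_induces (hμ : ∀ A ∈ defFam sat, μ A ⊆ A)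
    (hR : Induces sat neg μ rel) (Γ : Set F) :
    μ (modSet sat Γ) ⊆ modSet sat (Γ ∪ relC rel Γ) := by
  rw [modSet_union_s14]
  exact Set.subset_inter (hμ _ ⟨Γ, rfl⟩) (subset_modSet_iff.2 fun α hα => ((hR Γ α).1 hα).1)

theorem subset_modSet_neg_of_induces (hR : Induces sat neg μ rel) {β : F}
    (hβ : β ∉ relC rel Γ) (h : μ (modSet sat Γ) ⊆ modSet sat {β}) :
    μ (modSet sat Γ) ⊆ modSet sat {neg β} := by
  by_contra hn
  exact hβ ((hR Γ β).2 ⟨h, hn⟩)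

theorem subset_modSet_cut_of_induces (hμ : ∀ A ∈ defFam sat, μ A ⊆ A)
    (hR : Induces sat neg μ rel) {β : F} (hβ : β ∈ cnsq sat (Γ ∪ relC rel Γ))
    (hβC : β ∉ relC rel Γ) :
    μ (modSet sat Γ) ⊆ modSet sat (Γ ∪ relC rel Γ ∪ {neg β}) := by
  have hX := subset_modSet_relC_of_induces hμ hR Γ
  rw [modSet_union_s14]
  exact Set.subset_inter hX (subset_modSet_neg_of_induces hR hβC (hX.trans hβ))

theorem subset_modSet_hClosure_of_induces (hμ : ∀ A ∈ defFam sat, μ A ⊆ A)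
    (hR : Induces sat neg μ rel) (Γ : Set F) :
    μ (modSet sat Γ) ⊆ modSet sat (hClosure sat neg rel Γ) :=
  subset_modSet_hClosure (fun _ => subset_modSet_neg_of_induces hR)
    (subset_modSet_relC_of_induces hμ hR Γ)

theorem modSet_hClosure_subset_of_induces [Finite V] (hA3 : assumpA3 sat neg disj conj)
    (hA2 : assumpA2 sat neg) (hR : Induces sat neg μ rel) {γ : F}
    (hγ : μ (modSet sat Γ) ⊆ modSet sat {γ}) :
    modSet sat (hClosure sat neg rel Γ) ⊆ modSet sat {γ} := by
  by_cases hγC : γ ∈ relC rel Γ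
  · exact modSet_hClosure_subset_of_mem Γ hγC
  set ε := conj γ (neg γ)
  have hε : modSet sat {ε} = modSet sat {γ} ∩ modSet sat {neg γ} := (hA3 γ (neg γ)).2.1
  have hnnε : modSet sat {neg (neg ε)} = modSet sat {ε} := (hA3 ε ε).2.2.1
  have hXε : μ (modSet sat Γ) ⊆ modSet sat {ε} :=
    hε ▸ Set.subset_inter hγ (subset_modSet_neg_of_induces hR hγC hγ)
  have hdec : modSet sat (hClosure sat neg rel Γ) ∩ modSet sat {ε} ⊆
      modSet sat {neg ε} := by
    rw [(hA3 γ (neg γ)).2.2.2.2, (hA3 _ _).1, hε]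
    exact fun v hv => Or.inl hv.2.2
  suffices hY : modSet sat (hClosure sat neg rel Γ) ⊆ modSet sat {ε} from
    hY.trans (hε ▸ Set.inter_subset_left)
  rcases cnsq_or_neg_mem_of_assumpA2 hA2 hdec with h | h
  · exact h
  · have hnε : neg ε ∉ relC rel Γ := fun hC => ((hR Γ _).1 hC).2 (hnnε ▸ hXε)
    exact hnnε ▸ modSet_hClosure_subset_neg hnε h

theorem cond0_of_induces (hR : Induces sat neg μ rel) : cond0 sat rel := by
  intro Γ Δ h
  have hmod : modSet sat Γ = modSet sat Δ := by rw [← modSet_cnsq Γ, h, modSet_cnsq]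
  ext α
  change rel Γ α ↔ rel Δ α
  rw [hR, hR, hmod]

theorem cond6_of_induces (hμ : ∀ A ∈ defFam sat, μ A ⊆ A) (hR : Induces sat neg μ rel) :
    cond6 sat neg rel := fun Γ α _ hβ hβC hα hαC =>
  ((hR Γ α).1 hαC).2 ((subset_modSet_cut_of_induces hμ hR hβ hβC).trans hα)

theorem cond7_of_induces (hA3 : assumpA3 sat neg disj conj) (hμ : ∀ A ∈ defFam sat, μ A ⊆ A)
    (hR : Induces sat neg μ rel) : cond7 sat neg disj rel := by
  intro Γ α β hα hαC hβ hβC hαβ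
  have hXα := subset_modSet_neg_of_induces hR hαC
    ((subset_modSet_relC_of_induces hμ hR Γ).trans hα)
  have hXβ := subset_modSet_neg_of_induces hR hβC
    ((subset_modSet_cut_of_induces hμ hR hα hαC).trans hβ)
  refine ((hR Γ _).1 hαβ).2 ?_
  rw [(hA3 α β).2.2.2.1, (hA3 _ _).2.1]
  exact Set.subset_inter hXα hXβ

theorem cond8_of_induces (hμ : ∀ A ∈ defFam sat, μ A ⊆ A) (hR : Induces sat neg μ rel) :
    cond8 sat neg rel := fun Γ α hα h =>
  ((hR Γ α).1 hα).2 ((subset_modSet_relC_of_induces hμ hR Γ).trans h)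

theorem cond11_of_induces [Finite V] (hA3 : assumpA3 sat neg disj conj)
    (hA2 : assumpA2 sat neg) (hμ : ∀ A ∈ defFam sat, μ A ⊆ A)
    (hSC : ∀ A ∈ defFam sat, ∀ B ∈ defFam sat, μ B ∩ A ⊆ μ A)
    (hR : Induces sat neg μ rel) : cond11 sat neg rel := by
  intro Γ
  have hXS : μ (modSet sat Γ) ⊆ modSet sat Γ ∩ preferredVals sat neg rel := fun v hv =>
    ⟨hμ _ ⟨Γ, rfl⟩ hv, fun Δ hvΔ => by
      have hY := subset_modSet_hClosure_of_induces hμ hR Δ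
        (hSC _ ⟨Δ, rfl⟩ _ ⟨Γ, rfl⟩ ⟨hv, hvΔ⟩)
      rw [hClosure, Set.union_assoc, modSet_union_s14] at hY
      exact hY.2⟩
  have hSY : modSet sat Γ ∩ preferredVals sat neg rel ⊆
      modSet sat (hClosure sat neg rel Γ) := fun v hv => by
    rw [hClosure, Set.union_assoc, modSet_union_s14]
    exact ⟨hv.1, hv.2 Γ hv.1⟩
  ext γ
  exact ⟨hSY.trans, fun hγ => modSet_hClosure_subset_of_induces hA3 hA2 hR (hXS.trans hγ)⟩

end Induces

theorem IsCutRegion.subset (hT : IsCutRegion sat neg rel Γ T) :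
    T ⊆ modSet sat (Γ ∪ relC rel Γ) := by
  rcases hT with rfl | ⟨δ, -, -, rfl⟩
  · rfl
  · exact modSet_anti_s14 Set.subset_union_left

theorem IsCutRegion.inter_neg (hA3 : assumpA3 sat neg disj conj) (hc7 : cond7 sat neg disj rel)
    (hT : IsCutRegion sat neg rel Γ T) {β : F} (hβ : β ∉ relC rel Γ)
    (hTβ : T ⊆ modSet sat {β}) : IsCutRegion sat neg rel Γ (T ∩ modSet sat {neg β}) := by
  rcases hT with rfl | ⟨δ, hδ, hδC, rfl⟩
  · exact Or.inr ⟨β, hTβ, hβ, (modSet_union_s14 _ _).symm⟩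
  · refine Or.inr ⟨disj δ β, fun v hv => ?_, hc7 Γ δ β hδ hδC hTβ hβ, ?_⟩
    · rw [(hA3 δ β).1]
      exact Or.inl (hδ hv)
    · rw [modSet_union_s14 _ {neg δ}, modSet_union_s14 _ {neg (disj δ β)}, (hA3 δ β).2.2.2.1,
        (hA3 _ _).2.1, Set.inter_assoc]

theorem IsCutRegion.not_subset_neg (hc6 : cond6 sat neg rel) (hc8 : cond8 sat neg rel)
    (hT : IsCutRegion sat neg rel Γ T) {α : F} (hα : α ∈ relC rel Γ) :
    ¬ T ⊆ modSet sat {neg α} := by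
  rcases hT with rfl | ⟨δ, hδ, hδC, rfl⟩
  · exact hc8 Γ α hα
  · exact fun h => hc6 Γ α δ hδ hδC h hα

theorem exists_isCutRegion_subset_modSet_hClosure [Finite V] (hA3 : assumpA3 sat neg disj conj)
    (hc7 : cond7 sat neg disj rel) (Γ : Set F) :
    ∃ T, IsCutRegion sat neg rel Γ T ∧ T ⊆ modSet sat (hClosure sat neg rel Γ) := by
  obtain ⟨T, hT, hmin⟩ :=
    exists_minimal_of_wellFoundedLT (IsCutRegion sat neg rel Γ) ⟨_, Or.inl rfl⟩
  refine ⟨T, hT, subset_modSet_hClosure (fun β hβ hTβ => ?_) hT.subset⟩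
  exact (hmin (hT.inter_neg hA3 hc7 hβ hTβ) Set.inter_subset_left).trans Set.inter_subset_right

theorem rel_iff_modSet_hClosure [Finite V] (hA3 : assumpA3 sat neg disj conj)
    (hc6 : cond6 sat neg rel) (hc7 : cond7 sat neg disj rel) (hc8 : cond8 sat neg rel)
    (Γ : Set F) (α : F) :
    rel Γ α ↔ (modSet sat (hClosure sat neg rel Γ) ⊆ modSet sat {α} ∧
      ¬ modSet sat (hClosure sat neg rel Γ) ⊆ modSet sat {neg α}) := by
  constructor
  · intro hα
    obtain ⟨T, hT, hTY⟩ := exists_isCutRegion_subset_modSet_hClosure hA3 hc7 Γ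
    exact ⟨modSet_hClosure_subset_of_mem Γ hα,
      fun h => hT.not_subset_neg hc6 hc8 hα (hTY.trans h)⟩
  · rintro ⟨h, hneg⟩
    by_contra hα
    exact hneg (modSet_hClosure_subset_neg hα h)

theorem induces_preferredVals [Finite V] (hA3 : assumpA3 sat neg disj conj)
    (hc6 : cond6 sat neg rel) (hc7 : cond7 sat neg disj rel) (hc8 : cond8 sat neg rel)
    (hc11 : cond11 sat neg rel) : Induces sat neg (· ∩ preferredVals sat neg rel) rel := by
  intro Γ α
  have h11 (γ : F) : modSet sat Γ ∩ preferredVals sat neg rel ⊆ modSet sat {γ} ↔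
      modSet sat (hClosure sat neg rel Γ) ⊆ modSet sat {γ} :=
    (Set.ext_iff.1 (hc11 Γ) γ).symm
  rw [h11, h11]
  exact rel_iff_modSet_hClosure hA3 hc6 hc7 hc8 Γ α

end

/-- Under `(A3)`, `(A1)`, and `(A2)`, `|~` is a pivotal-discriminative
consequence relation iff it satisfies `(|~0)`, `(|~6)`, `(|~7)`, `(|~8)`, and `(|~11)`. -/
theorem stmt14 {F V : Type*} (neg : F → F) (disj conj : F → F → F)
    (sat : V → F → Prop)
    (hA3 : assumpA3 sat neg disj conj) (hA1 : Finite V)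
    (hA2 : assumpA2 sat neg)
    (rel : Set F → F → Prop) :
    (∃ μ : Set V → Set V,
        (∀ A ∈ defFam sat, μ A ⊆ A) ∧
        (∀ A ∈ defFam sat, ∀ B ∈ defFam sat, μ B ∩ A ⊆ μ A) ∧
        (∀ (Γ : Set F) (α : F), rel Γ α ↔
          (μ (modSet sat Γ) ⊆ modSet sat {α} ∧
            ¬ μ (modSet sat Γ) ⊆ modSet sat {neg α}))) ↔
      (cond0 sat rel ∧ cond6 sat neg rel ∧ cond7 sat neg disj rel ∧
        cond8 sat neg rel ∧ cond11 sat neg rel) := by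
  constructor
  · rintro ⟨μ, hμ, hSC, hR⟩
    exact ⟨cond0_of_induces hR, cond6_of_induces hμ hR, cond7_of_induces hA3 hμ hR,
      cond8_of_induces hμ hR, cond11_of_induces hA3 hA2 hμ hSC hR⟩
  · rintro ⟨-, hc6, hc7, hc8, hc11⟩
    exact ⟨(· ∩ preferredVals sat neg rel), fun _ _ => Set.inter_subset_left,
      fun _ _ _ _ _ hv => ⟨hv.2, hv.1.2⟩, induces_preferredVals hA3 hc6 hc7 hc8 hc11⟩
end
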